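/- arXiv:2110.01070 — 2 statements merged into one kernel-verified Lean document; each statement's English description precedes it below -/
import Mathlib

section
/- Every route l in the expanded topological family Ω_f (i.e., every feasible route whose consecutive-visit order is consistent with β^f) corresponds to at least one source-to-sink path in G^f whose edge costs sum to c_l; thus the map from source-sink paths of G^f to Ω_f is surjective. -/
/-- Edges of the expanded topological family graph `G^f` for CVRP. -/
def gEdge {N : Type*} (d : N → ℕ) (d0 : ℕ) (β : N → ℕ) :
    ((N × ℕ) ⊕ Bool) → ((N × ℕ) ⊕ Bool) → Prop
  | Sum.inr false, Sum.inl (u, a) => a + d u = d0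
  | Sum.inl (u, a), Sum.inl (v, b) => β u < β v ∧ b + d v = a ∧ a + d u ≤ d0
  | Sum.inl (u, a), Sum.inr true => a + d u ≤ d0
  | _, _ => False

/-- Edge costs in `G^f`. -/
def gCost {N : Type*} (cOut cIn : N → ℝ) (cMid : N → N → ℝ) :
    ((N × ℕ) ⊕ Bool) → ((N × ℕ) ⊕ Bool) → ℝ
  | Sum.inr _, Sum.inl (u, _) => cOut u
  | Sum.inl (u, _), Sum.inl (v, _) => cMid u v
  | Sum.inl (u, _), Sum.inr _ => cIn u
  | _, _ => 0

/-- Total edge cost along a list of vertices. -/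
def pathCost {N : Type*} (cOut cIn : N → ℝ) (cMid : N → N → ℝ)
    (vs : List ((N × ℕ) ⊕ Bool)) : ℝ :=
  ((vs.zip vs.tail).map (fun e => gCost cOut cIn cMid e.1 e.2)).sum

/-! The path realizing a route `u₁, …, u_k` visits `(u_i, a_i)`, where `a_i` is the capacity
left after serving `u₁, …, u_i`: the source edge forces `a₁ + d u₁ = d0`, each middle edge
`a_{i+1} + d u_{i+1} = a_i`, and the sink edge is always available once `a_k` is a genuine
(untruncated) difference, i.e. once the route's total demand is at most `d0`. -/

section

variable {N : Type*}

def withResidualCapacity (d : N → ℕ) : ℕ → List N → List (N × ℕ)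
  | _, [] => []
  | a, u :: us => (u, a - d u) :: withResidualCapacity d (a - d u) us

@[simp]
lemma map_fst_withResidualCapacity (d : N → ℕ) (a : ℕ) (r : List N) :
    (withResidualCapacity d a r).map Prod.fst = r := by
  induction r generalizing a with
  | nil => rfl
  | cons u us ih => simp [withResidualCapacity, ih]

lemma isChain_gEdge_withResidualCapacity (d : N → ℕ) (d0 : ℕ) (β : N → ℕ)
    (u : N) (a : ℕ) (us : List N) (hu : a + d u ≤ d0) (hdem : (us.map d).sum ≤ a)
    (horder : (u :: us).IsChain (fun u v => β u < β v)) :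
    (Sum.inl (u, a) :: ((withResidualCapacity d a us).map Sum.inl ++ [Sum.inr true]) :
      List ((N × ℕ) ⊕ Bool)).IsChain (gEdge d d0 β) := by
  induction us generalizing u a with
  | nil => exact List.isChain_pair.mpr hu
  | cons v vs ih =>
    rw [List.map_cons, List.sum_cons] at hdem
    obtain ⟨huv, hrest⟩ := List.isChain_cons_cons.mp horder
    refine List.isChain_cons_cons.mpr ⟨⟨huv, by omega, hu⟩, ?_⟩
    exact ih v (a - d v) (by omega) (by omega) hrest

lemma pathCost_cons_cons (cOut cIn : N → ℝ) (cMid : N → N → ℝ)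
    (x y : (N × ℕ) ⊕ Bool) (l : List ((N × ℕ) ⊕ Bool)) :
    pathCost cOut cIn cMid (x :: y :: l)
      = gCost cOut cIn cMid x y + pathCost cOut cIn cMid (y :: l) := by
  simp [pathCost]

lemma pathCost_map_inl_append_sink (cOut cIn : N → ℝ) (cMid : N → N → ℝ)
    (seq : List (N × ℕ)) (hne : seq.map Prod.fst ≠ []) :
    pathCost cOut cIn cMid (seq.map Sum.inl ++ [Sum.inr true])
      = (((seq.map Prod.fst).zip (seq.map Prod.fst).tail).map (fun e => cMid e.1 e.2)).sum
        + cIn ((seq.map Prod.fst).getLast hne) := by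
  induction seq with
  | nil => simp at hne
  | cons p ps ih =>
    cases ps with
    | nil => simp [pathCost, gCost]
    | cons q qs =>
      simp only [List.map_cons, List.cons_append] at ih ⊢
      rw [pathCost_cons_cons, ih (by simp)]
      simp only [List.getLast_cons_cons, List.tail_cons, List.zip_cons_cons, List.map_cons,
        List.sum_cons, gCost]
      ring

end

theorem gg_family_paths_surject_onto_family_general
    {N : Type*}
    (d : N → ℕ) (d0 : ℕ) (β : N → ℕ)
    (cOut cIn : N → ℝ) (cMid : N → N → ℝ)
    (r : List N) (hne : r ≠ [])
    (hdem : (r.map d).sum ≤ d0)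
    (horder : r.Chain' (fun u v => β u < β v)) :
    ∃ seq : List (N × ℕ), ∃ hseq : seq ≠ [],
      (Sum.inr false :: (seq.map Sum.inl ++ [Sum.inr true]) :
        List ((N × ℕ) ⊕ Bool)).Chain' (gEdge d d0 β) ∧
      seq.map Prod.fst = r ∧
      pathCost cOut cIn cMid
          (Sum.inr false :: (seq.map Sum.inl ++ [Sum.inr true]))
        = cOut (r.head hne)
          + ((r.zip r.tail).map (fun e => cMid e.1 e.2)).sum
          + cIn (r.getLast hne) := by
  obtain ⟨u, us, rfl⟩ := List.exists_cons_of_ne_nil hne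
  rw [List.map_cons, List.sum_cons] at hdem
  set seq := withResidualCapacity d d0 (u :: us)
  have hfst : seq.map Prod.fst = u :: us := map_fst_withResidualCapacity d d0 _
  have hpath : (seq.map Sum.inl ++ [Sum.inr true] : List ((N × ℕ) ⊕ Bool))
      = Sum.inl (u, d0 - d u) :: ((withResidualCapacity d (d0 - d u) us).map Sum.inl
          ++ [Sum.inr true]) := rfl
  refine ⟨seq, by simp [seq, withResidualCapacity], ?_, hfst, ?_⟩
  · rw [hpath]
    refine List.isChain_cons_cons.mpr ⟨show d0 - d u + d u = d0 by omega, ?_⟩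
    exact isChain_gEdge_withResidualCapacity d d0 β u _ us (by omega) (by omega) horder
  · rw [hpath, pathCost_cons_cons, ← hpath, pathCost_map_inl_append_sink _ _ _ _ (by simp [hfst])]
    simp only [hfst]
    exact (add_assoc _ _ _).symm

/-- Every route of the expanded topological family `Ω_f` — i.e. every feasible route
whose consecutive-visit order is consistent with `β^f` — is realized by at least one
source-to-sink path of `G^f` whose edge costs sum to the cost of the route; hence the
map from source-to-sink paths of `G^f` to `Ω_f` is surjective. -/
theorem gg_family_paths_surject_onto_family
    {N : Type*} [DecidableEq N]
    (d : N → ℕ) (d0 : ℕ) (β : N → ℕ) (hβ : Function.Injective β)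
    (cOut cIn : N → ℝ) (cMid : N → N → ℝ)
    (r : List N) (hne : r ≠ []) (hnodup : r.Nodup)
    (hdem : (r.map d).sum ≤ d0)
    (horder : r.Chain' (fun u v => β u < β v)) :
    ∃ seq : List (N × ℕ), ∃ hseq : seq ≠ [],
      (Sum.inr false :: (seq.map Sum.inl ++ [Sum.inr true]) :
        List ((N × ℕ) ⊕ Bool)).Chain' (gEdge d d0 β) ∧
      seq.map Prod.fst = r ∧
      pathCost cOut cIn cMid
          (Sum.inr false :: (seq.map Sum.inl ++ [Sum.inr true]))
        = cOut (r.head hne)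
          + ((r.zip r.tail).map (fun e => cMid e.1 e.2)).sum
          + cIn (r.getLast hne) :=
  gg_family_paths_surject_onto_family_general d d0 β cOut cIn cMid r hne hdem horder
end

section
/- If each family Ω_{f_l} contains its generating column l, then at every iteration of Graph Generation Ψ(Ω_{R2}) ≤ Ψ(Ω_R), and Graph Generation terminates with the exact optimum of the master problem: when pricing finds no negative reduced cost column at the GG dual solution, the GG RMP optimal value equals the MP optimal value. -/
/-- Set of objective values of feasible solutions of the master problem restricted to
the column set `S`. -/
def mpValues {L : Type*} [Fintype L] {m : ℕ}
    (A : L → Fin m → ℝ) (c : L → ℝ) (b : Fin m → ℝ) (S : Finset L) : Set ℝ :=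
  {z | ∃ θ : L → ℝ, (∀ l, 0 ≤ θ l) ∧ (∀ l ∉ S, θ l = 0) ∧
    (∀ i, b i ≤ ∑ l : L, A l i * θ l) ∧ z = ∑ l : L, c l * θ l}

/-- `Ψ(S)`: the optimal value of the master problem restricted to columns `S`. -/
noncomputable def Psi {L : Type*} [Fintype L] {m : ℕ}
    (A : L → Fin m → ℝ) (c : L → ℝ) (b : Fin m → ℝ) (S : Finset L) : ℝ :=
  sInf (mpValues A c b S)

/-!
The enlarged column set `Ω_{R2}` contains `Ω_R`, so its restricted master problem can only be
better. At termination the GG dual `π` is feasible for the dual of the full master problem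
(no column has negative reduced cost), so by weak duality every feasible value over any
column set is at least `∑ π b`; the GG primal optimum `θ*` attains this bound and is also
feasible for the full problem, hence `Ψ(Ω_{R2}) = ∑ π b = Ψ(Ω)`.
-/

section MasterProblem

variable {L : Type*} [Fintype L] {m : ℕ} (A : L → Fin m → ℝ) (c : L → ℝ) (b : Fin m → ℝ)

lemma mpValues_mono {S T : Finset L} (h : S ⊆ T) : mpValues A c b S ⊆ mpValues A c b T := by
  rintro z ⟨θ, hθ, hsupp, hfeas, rfl⟩
  exact ⟨θ, hθ, fun l hl => hsupp l (mt (@h l) hl), hfeas, rfl⟩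

lemma Psi_anti {S T : Finset L} (h : S ⊆ T) (hS : (mpValues A c b S).Nonempty)
    (hT : BddBelow (mpValues A c b T)) : Psi A c b T ≤ Psi A c b S :=
  csInf_le_csInf hT hS (mpValues_mono A c b h)

variable {A c b} {π : Fin m → ℝ}

lemma dual_obj_le_of_mem_mpValues (hπ : ∀ i, 0 ≤ π i)
    (hreduced : ∀ l, 0 ≤ c l - ∑ i, π i * A l i) {S : Finset L} {z : ℝ}
    (hz : z ∈ mpValues A c b S) : ∑ i, π i * b i ≤ z := by
  obtain ⟨θ, hθ, -, hfeas, rfl⟩ := hz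
  calc ∑ i, π i * b i ≤ ∑ i, π i * ∑ l, A l i * θ l :=
        Finset.sum_le_sum fun i _ => mul_le_mul_of_nonneg_left (hfeas i) (hπ i)
    _ = ∑ l, (∑ i, π i * A l i) * θ l := by
        simp_rw [Finset.mul_sum, Finset.sum_mul, ← mul_assoc]
        exact Finset.sum_comm
    _ ≤ ∑ l, c l * θ l :=
        Finset.sum_le_sum fun l _ =>
          mul_le_mul_of_nonneg_right (sub_nonneg.mp (hreduced l)) (hθ l)

lemma Psi_eq_dual_obj (hπ : ∀ i, 0 ≤ π i) (hreduced : ∀ l, 0 ≤ c l - ∑ i, π i * A l i)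
    {S : Finset L} (hmem : ∑ i, π i * b i ∈ mpValues A c b S) :
    Psi A c b S = ∑ i, π i * b i :=
  le_antisymm (csInf_le ⟨_, fun _ => dual_obj_le_of_mem_mpValues hπ hreduced⟩ hmem)
    (le_csInf ⟨_, hmem⟩ fun _ => dual_obj_le_of_mem_mpValues hπ hreduced)

end MasterProblem

theorem gg_monotone_and_terminates_with_mp_optimum_general
    {L : Type*} [Fintype L] [DecidableEq L] {m : ℕ}
    (A : L → Fin m → ℝ) (c : L → ℝ) (b : Fin m → ℝ)
    (fam : L → Finset L) (hself : ∀ l, l ∈ fam l)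
    (ΩR : Finset L)
    (hneR : (mpValues A c b ΩR).Nonempty)
    -- π is the GG dual solution: dual optimal for the RMP over Ω_{R2}, with
    -- primal optimal solution θ* (strong duality)
    (π : Fin m → ℝ) (θstar : L → ℝ)
    (hπ : ∀ i, 0 ≤ π i)
    (hθnonneg : ∀ l, 0 ≤ θstar l)
    (hθsupp : ∀ l ∉ ΩR.biUnion fam, θstar l = 0)
    (hθfeas : ∀ i, b i ≤ ∑ l : L, A l i * θstar l)
    (hstrong : ∑ i, π i * b i = ∑ l : L, c l * θstar l)
    -- exact pricing finds no negative reduced cost column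
    (hpricing : ∀ l : L, 0 ≤ c l - ∑ i, π i * A l i) :
    Psi A c b (ΩR.biUnion fam) ≤ Psi A c b ΩR ∧
    Psi A c b (ΩR.biUnion fam) = Psi A c b Finset.univ := by
  have hsub : ΩR ⊆ ΩR.biUnion fam := fun l hl => Finset.mem_biUnion.mpr ⟨l, hl, hself l⟩
  have hbdd : BddBelow (mpValues A c b (ΩR.biUnion fam)) :=
    ⟨_, fun _ => dual_obj_le_of_mem_mpValues hπ hpricing⟩
  have hθmem : ∑ i, π i * b i ∈ mpValues A c b (ΩR.biUnion fam) :=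
    ⟨θstar, hθnonneg, hθsupp, hθfeas, hstrong⟩
  refine ⟨Psi_anti A c b hsub hneR hbdd, ?_⟩
  rw [Psi_eq_dual_obj hπ hpricing hθmem,
    Psi_eq_dual_obj hπ hpricing (mpValues_mono A c b (Finset.subset_univ _) hθmem)]

/-- If each family `Ω_{f_l}` contains its generating column `l`, then at every iteration
of Graph Generation `Ψ(Ω_{R2}) ≤ Ψ(Ω_R)` for `Ω_{R2} = ∪_{l∈Ω_R} Ω_{f_l}`; and upon
termination — when exact pricing finds no negative reduced cost column at the GG dual
solution `π` — the GG RMP optimal value `Ψ(Ω_{R2})` equals the master problem optimum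
`Ψ(Ω)`. -/
theorem gg_monotone_and_terminates_with_mp_optimum
    {L : Type*} [Fintype L] [DecidableEq L] {m : ℕ}
    (A : L → Fin m → ℝ) (c : L → ℝ) (b : Fin m → ℝ)
    (fam : L → Finset L) (hself : ∀ l, l ∈ fam l)
    (ΩR : Finset L)
    (hneR : (mpValues A c b ΩR).Nonempty)
    (hbdd2 : BddBelow (mpValues A c b (ΩR.biUnion fam)))
    -- π is the GG dual solution: dual optimal for the RMP over Ω_{R2}, with
    -- primal optimal solution θ* (strong duality)
    (π : Fin m → ℝ) (θstar : L → ℝ)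
    (hπ : ∀ i, 0 ≤ π i)
    (hθnonneg : ∀ l, 0 ≤ θstar l)
    (hθsupp : ∀ l ∉ ΩR.biUnion fam, θstar l = 0)
    (hθfeas : ∀ i, b i ≤ ∑ l : L, A l i * θstar l)
    (hstrong : ∑ i, π i * b i = ∑ l : L, c l * θstar l)
    -- exact pricing finds no negative reduced cost column
    (hpricing : ∀ l : L, 0 ≤ c l - ∑ i, π i * A l i) :
    Psi A c b (ΩR.biUnion fam) ≤ Psi A c b ΩR ∧
    Psi A c b (ΩR.biUnion fam) = Psi A c b Finset.univ :=
  gg_monotone_and_terminates_with_mp_optimum_general A c b fam hself ΩR hneR π θstar hπ hθnonneg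
    hθsupp hθfeas hstrong hpricing
end
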